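/- arXiv:2209.13534 — 2 statements merged into one kernel-verified Lean document; each statement's English description precedes it below -/
import Mathlib

section
/- For an R-module M, the collection E = {E_r : r ∈ R}, where E_r = Spec^L(M) \ ν^s(Ann_M(r)), forms a base for the Zariski topology on Spec^L(M) whose closed sets are {ν^s(N) : N ≤ M}. -/
open Pointwise

section Defs
variable (R M : Type*) [CommRing R] [AddCommGroup M] [Module R M]

/-- A submodule `S` is second if `S ≠ 0` and for every `r : R`, `r • S = S` or `r • S = 0`. -/
def IsSecond (S : Submodule R M) : Prop :=
  S ≠ ⊥ ∧ ∀ r : R, r • S = S ∨ r • S = ⊥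

/-- A submodule `K` is secondary if `K ≠ 0` and for every `r : R`,
`r • K = K` or `r ^ n • K = 0` for some `n ≥ 1`. -/
def IsSecondary (K : Submodule R M) : Prop :=
  K ≠ ⊥ ∧ ∀ r : R, r • K = K ∨ ∃ n : ℕ, 0 < n ∧ r ^ n • K = ⊥

/-- The socle of a submodule `N`: the sum of all second submodules contained in `N`. -/
def soc (N : Submodule R M) : Submodule R M :=
  sSup {S : Submodule R M | IsSecond R M S ∧ S ≤ N}

/-- The secondary-like spectrum of `M`. -/
def SpecL : Set (Submodule R M) :=
  {K | IsSecondary R M K ∧ (soc R M K).annihilator = K.annihilator.radical}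

/-- The variety `ν^s(N)`. -/
def nuS (N : Submodule R M) : Set (Submodule R M) :=
  {K | K ∈ SpecL R M ∧ N.annihilator ≤ K.annihilator.radical}

/-- The variety `ν^{s*}(N)`. -/
def nuSStar (N : Submodule R M) : Set (Submodule R M) :=
  {K | K ∈ SpecL R M ∧ soc R M K ≤ N}

end Defs

section Top
variable (R M : Type*) [CommRing R] [AddCommGroup M] [Module R M]

/-- The variety `ν^s(N)` viewed inside `Spec^L(M)`. -/
def nuS' (N : Submodule R M) : Set (SpecL R M) :=
  {K | N.annihilator ≤ (K : Submodule R M).annihilator.radical}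

/-- The Zariski (SL-) topology on `Spec^L(M)`, whose closed sets are the `ν^s(N)`. -/
instance SLTopology : TopologicalSpace (SpecL R M) :=
  TopologicalSpace.generateFrom {U | ∃ N : Submodule R M, U = (nuS' R M N)ᶜ}

/-- The basic open set `E_r = Spec^L(M) \\ ν^s(Ann_M(r))`. -/
def Eopen (r : R) : Set (SpecL R M) :=
  (nuS' R M (Submodule.torsionBy R M r))ᶜ

end Top

variable {R M : Type*} [CommRing R] [AddCommGroup M] [Module R M]

/-- The submodule of elements of `M` annihilated by every element of the ideal `I`. -/
def annM (I : Ideal R) : Submodule R M where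
  carrier := {m | ∀ r ∈ I, r • m = 0}
  add_mem' := fun ha hb r hr => by simp [smul_add, ha r hr, hb r hr]
  zero_mem' := fun r _ => smul_zero r
  smul_mem' := fun c m hm r hr => by rw [smul_comm, hm r hr, smul_zero]

lemma mem_annM {I : Ideal R} {m : M} : m ∈ (annM I : Submodule R M) ↔ ∀ r ∈ I, r • m = 0 :=
  Iff.rfl

lemma le_annM_iff {I : Ideal R} {N : Submodule R M} :
    N ≤ annM I ↔ I ≤ N.annihilator := by
  constructor
  · intro h r hr
    exact Submodule.mem_annihilator.2 fun n hn => h hn r hr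
  · intro h n hn r hr
    exact Submodule.mem_annihilator.1 (h hr) n hn

lemma le_annM_ann (N : Submodule R M) : N ≤ annM N.annihilator :=
  le_annM_iff.2 le_rfl

lemma annM_ann_annM (I : Ideal R) :
    (annM ((annM I : Submodule R M).annihilator) : Submodule R M) = annM I := by
  refine le_antisymm ?_ (le_annM_ann _)
  intro m hm r hr
  exact hm r (le_annM_iff.1 (le_refl (annM I : Submodule R M)) hr)

lemma smul_submodule_eq_bot_iff {a : R} {K : Submodule R M} :
    a • K = ⊥ ↔ ∀ m ∈ K, a • m = 0 := by
  constructor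
  · intro h m hm
    have : a • m ∈ a • K := Submodule.smul_mem_pointwise_smul m a K hm
    rw [h] at this
    simpa using this
  · intro h
    rw [eq_bot_iff]
    intro x hx
    obtain ⟨m, hm, rfl⟩ := Set.mem_smul_set.1 hx
    simpa using h m hm

lemma pow_smul_eq_self {a : R} {K : Submodule R M} (h : a • K = K) (n : ℕ) :
    a ^ n • K = K := by
  induction n with
  | zero => simp
  | succ n ih => rw [pow_succ, mul_smul, h, ih]

/-- The radical of the annihilator of a secondary module is prime. -/
lemma radical_ann_isPrime {K : Submodule R M} (h : IsSecondary R M K) :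
    K.annihilator.radical.IsPrime := by
  constructor
  · intro ht
    have h1 : (1 : R) ∈ K.annihilator.radical := ht ▸ Submodule.mem_top
    obtain ⟨n, hn⟩ := Ideal.mem_radical_iff.1 h1
    rw [one_pow] at hn
    exact h.1 (Submodule.annihilator_eq_top_iff.1 ((Ideal.eq_top_iff_one _).2 hn))
  · intro a b hab
    by_cases ha : a ∈ K.annihilator.radical
    · exact Or.inl ha
    · right
      rcases h.2 a with haK | ⟨n, hn, hbot⟩
      · obtain ⟨n, hn⟩ := Ideal.mem_radical_iff.1 hab
        refine Ideal.mem_radical_iff.2 ⟨n, Submodule.mem_annihilator.2 fun m hm => ?_⟩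
        have hK : a ^ n • K = K := pow_smul_eq_self haK n
        have h2 : (a * b) ^ n • K = ⊥ := by
          rw [smul_submodule_eq_bot_iff]
          intro m' hm'
          exact Submodule.mem_annihilator.1 hn m' hm'
        have : b ^ n • K = ⊥ := by
          calc b ^ n • K = b ^ n • (a ^ n • K) := by rw [hK]
          _ = (a * b) ^ n • K := by rw [← mul_smul, mul_pow, mul_comm]
          _ = ⊥ := h2
        exact smul_submodule_eq_bot_iff.1 this m hm
      · exact absurd (Ideal.mem_radical_iff.2 ⟨n, Submodule.mem_annihilator.2
          (smul_submodule_eq_bot_iff.1 hbot)⟩) ha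

lemma mem_nuS'_iff {N : Submodule R M} {K : SpecL R M} :
    K ∈ nuS' R M N ↔ soc R M (K : Submodule R M) ≤ annM N.annihilator := by
  have hK : (soc R M (K : Submodule R M)).annihilator
      = (K : Submodule R M).annihilator.radical := K.2.2
  constructor
  · intro h
    refine le_annM_iff.2 fun r hr => ?_
    rw [hK]
    exact h hr
  · intro h r hr
    rw [← hK]
    exact le_annM_iff.1 h hr

lemma nuS'_iInter {ι : Sort*} (N : ι → Submodule R M) :
    nuS' R M (annM (⨆ i, (N i).annihilator)) = ⋂ i, nuS' R M (N i) := by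
  ext K
  simp only [Set.mem_iInter, mem_nuS'_iff, annM_ann_annM]
  rw [le_annM_iff, iSup_le_iff]
  constructor
  · intro h i
    exact le_annM_iff.2 (h i)
  · intro h i
    exact le_annM_iff.1 (h i)

lemma annihilator_sup (N₁ N₂ : Submodule R M) :
    (N₁ ⊔ N₂).annihilator = N₁.annihilator ⊓ N₂.annihilator := by
  refine le_antisymm (le_inf (Submodule.annihilator_mono le_sup_left)
    (Submodule.annihilator_mono le_sup_right)) ?_
  intro r hr
  refine Submodule.mem_annihilator.2 fun n hn => ?_
  obtain ⟨a, ha, b, hb, rfl⟩ := Submodule.mem_sup.1 hn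
  rw [smul_add, Submodule.mem_annihilator.1 hr.1 a ha,
    Submodule.mem_annihilator.1 hr.2 b hb, add_zero]

lemma nuS'_sup (N₁ N₂ : Submodule R M) :
    nuS' R M (N₁ ⊔ N₂) = nuS' R M N₁ ∪ nuS' R M N₂ := by
  ext K
  have hp : (K : Submodule R M).annihilator.radical.IsPrime :=
    radical_ann_isPrime K.2.1
  simp only [nuS', Set.mem_setOf_eq, Set.mem_union, annihilator_sup]
  exact hp.inf_le

lemma nuS'_bot : nuS' R M (⊥ : Submodule R M) = (∅ : Set (SpecL R M)) := by
  ext K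
  simp only [nuS', Set.mem_setOf_eq, Submodule.annihilator_bot, top_le_iff,
    Set.mem_empty_iff_false, iff_false]
  intro h
  have h1 : (1 : R) ∈ (K : Submodule R M).annihilator.radical := h ▸ Submodule.mem_top
  obtain ⟨n, hn⟩ := Ideal.mem_radical_iff.1 h1
  rw [one_pow] at hn
  exact K.2.1.1 (Submodule.annihilator_eq_top_iff.1 ((Ideal.eq_top_iff_one _).2 hn))

lemma isClosed_iff_exists {Y : Set (SpecL R M)} :
    IsClosed Y ↔ ∃ N : Submodule R M, Y = nuS' R M N := by
  constructor
  · intro h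
    have hY : TopologicalSpace.GenerateOpen
        {U | ∃ N : Submodule R M, U = (nuS' R M N)ᶜ} Yᶜ := h.isOpen_compl
    have key : ∀ U : Set (SpecL R M), TopologicalSpace.GenerateOpen
        {U | ∃ N : Submodule R M, U = (nuS' R M N)ᶜ} U →
        ∃ N : Submodule R M, Uᶜ = nuS' R M N := by
      intro U hU
      induction hU with
      | basic V hV =>
        obtain ⟨N, rfl⟩ := hV
        exact ⟨N, compl_compl _⟩
      | univ => exact ⟨⊥, by rw [Set.compl_univ, nuS'_bot]⟩
      | inter V W _ _ ihV ihW =>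
        obtain ⟨N₁, h₁⟩ := ihV
        obtain ⟨N₂, h₂⟩ := ihW
        exact ⟨N₁ ⊔ N₂, by rw [Set.compl_inter, h₁, h₂, nuS'_sup]⟩
      | sUnion S _ ih =>
        choose f hf using fun (U : S) => ih U U.2
        refine ⟨annM (⨆ U : S, (f U).annihilator), ?_⟩
        rw [nuS'_iInter]
        ext x
        simp only [Set.mem_compl_iff, Set.mem_sUnion, not_exists, Set.mem_iInter]
        constructor
        · intro h U
          rw [← hf U]
          exact fun hx => h U ⟨U.2, hx⟩
        · rintro h V ⟨hVS, hxV⟩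
          have hmem := h ⟨V, hVS⟩
          rw [← hf ⟨V, hVS⟩] at hmem
          exact hmem hxV
    obtain ⟨N, hN⟩ := key Yᶜ hY
    exact ⟨N, by rw [← compl_compl Y, hN]⟩
  · rintro ⟨N, rfl⟩
    exact ⟨TopologicalSpace.GenerateOpen.basic _ ⟨N, rfl⟩⟩

theorem Eopen_isTopologicalBasis :
    (∀ Y : Set (SpecL R M), IsClosed Y ↔ ∃ N : Submodule R M, Y = nuS' R M N) ∧
    TopologicalSpace.IsTopologicalBasis
      {U : Set (SpecL R M) | ∃ r : R, U = Eopen R M r} := by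
  refine ⟨fun Y => isClosed_iff_exists, ?_⟩
  refine TopologicalSpace.isTopologicalBasis_of_isOpen_of_nhds ?_ ?_
  · rintro U ⟨r, rfl⟩
    have : IsClosed (nuS' R M (Submodule.torsionBy R M r)) :=
      isClosed_iff_exists.2 ⟨_, rfl⟩
    exact this.isOpen_compl
  · intro x u hxu hu
    have : IsClosed uᶜ := isClosed_compl_iff.2 hu
    obtain ⟨N, hN⟩ := isClosed_iff_exists.1 this
    have hx : x ∉ nuS' R M N := fun h => by
      rw [← hN] at h; exact h hxu
    have hnle : ¬ N.annihilator ≤ (x : Submodule R M).annihilator.radical := hx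
    obtain ⟨r, hrN, hrx⟩ := SetLike.not_le_iff_exists.1 hnle
    refine ⟨Eopen R M r, ⟨r, rfl⟩, ?_, ?_⟩
    · -- x ∈ E_r
      intro hmem
      have hr : r ∈ (Submodule.torsionBy R M r).annihilator :=
        Submodule.mem_annihilator.2 fun m hm => hm
      exact hrx (hmem hr)
    · -- E_r ⊆ u
      intro K hK
      rw [← compl_compl u, hN]
      intro hKN
      apply hK
      -- K ∈ nuS' (torsionBy r)
      intro s hs
      have hsoc : (soc R M (K : Submodule R M)).annihilator
          = (K : Submodule R M).annihilator.radical := K.2.2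
      have hrK : r ∈ (soc R M (K : Submodule R M)).annihilator := by
        rw [hsoc]; exact hKN hrN
      have hsub : soc R M (K : Submodule R M) ≤ Submodule.torsionBy R M r :=
        fun m hm => Submodule.mem_annihilator.1 hrK m hm
      rw [← hsoc]
      exact Submodule.annihilator_mono hsub hs
end

section
/- Let M be an R-module and p a prime ideal of R. If K₁, K₂ ∈ Spec^L(M) with √(Ann_R(K₁)) = √(Ann_R(K₂)) = p, then K₁ + K₂ ∈ Spec^L(M) and √(Ann_R(K₁ + K₂)) = p. -/
open Pointwise

variable {R M : Type*} [CommRing R] [AddCommGroup M] [Module R M]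

private lemma pw_smul_eq_bot_iff (r : R) (K : Submodule R M) :
    r • K = ⊥ ↔ r ∈ K.annihilator := by
  constructor
  · intro h
    refine Submodule.mem_annihilator.2 fun n hn => ?_
    have := Submodule.smul_mem_pointwise_smul n r K hn
    rw [h] at this
    simpa using this
  · intro h
    rw [eq_bot_iff]
    rintro x hx
    obtain ⟨y, hy, rfl⟩ := hx
    simpa using Submodule.mem_annihilator.1 h y hy

private lemma pow_smul_self {r : R} {S : Submodule R M} (h : r • S = S) (n : ℕ) :
    r ^ n • S = S := by
  induction n with
  | zero => simp
  | succ n ih => rw [pow_succ, mul_smul, h, ih]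

private lemma annihilator_sup_s19 (A B : Submodule R M) :
    (A ⊔ B).annihilator = A.annihilator ⊓ B.annihilator := by
  apply le_antisymm
  · exact le_inf (Submodule.annihilator_mono le_sup_left)
      (Submodule.annihilator_mono le_sup_right)
  · intro r hr
    refine Submodule.mem_annihilator.2 fun n hn => ?_
    obtain ⟨a, ha, b, hb, rfl⟩ := Submodule.mem_sup.1 hn
    rw [smul_add, Submodule.mem_annihilator.1 hr.1 a ha,
      Submodule.mem_annihilator.1 hr.2 b hb, add_zero]

theorem sup_mem_specL_of_radical_eq (p : Ideal R) (hp : p.IsPrime)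
    (K₁ K₂ : Submodule R M) (h₁ : K₁ ∈ SpecL R M) (h₂ : K₂ ∈ SpecL R M)
    (hr₁ : K₁.annihilator.radical = p) (hr₂ : K₂.annihilator.radical = p) :
    K₁ ⊔ K₂ ∈ SpecL R M ∧ (K₁ ⊔ K₂).annihilator.radical = p := by
  obtain ⟨⟨hK₁ne, hsec₁⟩, hsoc₁⟩ := h₁
  obtain ⟨⟨hK₂ne, hsec₂⟩, hsoc₂⟩ := h₂
  have hrad : (K₁ ⊔ K₂).annihilator.radical = p := by
    rw [annihilator_sup_s19, Ideal.radical_inf, hr₁, hr₂, inf_idem]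
  -- if r ∈ p then some positive power of r kills K₁ ⊔ K₂
  have hkill : ∀ r ∈ p, ∃ n : ℕ, 0 < n ∧ r ^ n • (K₁ ⊔ K₂) = ⊥ := by
    intro r hr
    rw [← hrad] at hr
    obtain ⟨n, hn⟩ := Ideal.mem_radical_iff.1 hr
    refine ⟨n + 1, Nat.succ_pos _, (pw_smul_eq_bot_iff _ _).2 ?_⟩
    rw [pow_succ]
    exact Ideal.mul_mem_right _ _ hn
  have hsecondary : IsSecondary R M (K₁ ⊔ K₂) := by
    refine ⟨fun h => hK₁ne (le_bot_iff.1 (h ▸ le_sup_left)), fun r => ?_⟩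
    by_cases hrp : r ∈ p
    · exact Or.inr (hkill r hrp)
    · left
      have fix : ∀ K : Submodule R M, K.annihilator.radical = p →
          (r • K = K ∨ ∃ n : ℕ, 0 < n ∧ r ^ n • K = ⊥) → r • K = K := by
        intro K hK h
        rcases h with h | ⟨n, hn, hbot⟩
        · exact h
        · exact absurd (hp.mem_of_pow_mem n
            (hK ▸ Ideal.le_radical ((pw_smul_eq_bot_iff _ _).1 hbot))) hrp
      rw [Submodule.smul_sup', fix K₁ hr₁ (hsec₁ r), fix K₂ hr₂ (hsec₂ r)]
  refine ⟨⟨hsecondary, ?_⟩, hrad⟩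
  rw [hrad]
  apply le_antisymm
  · -- soc K₁ ≤ soc (K₁ ⊔ K₂)
    have hmono : soc R M K₁ ≤ soc R M (K₁ ⊔ K₂) :=
      sSup_le_sSup fun S hS => ⟨hS.1, hS.2.trans le_sup_left⟩
    calc (soc R M (K₁ ⊔ K₂)).annihilator ≤ (soc R M K₁).annihilator :=
          Submodule.annihilator_mono hmono
      _ = p := by rw [hsoc₁, hr₁]
  · intro r hr
    rw [soc, sSup_eq_iSup', Submodule.annihilator_iSup, Submodule.mem_iInf]
    rintro ⟨S, hSsec, hSle⟩
    rcases hSsec.2 r with hfix | hbot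
    · exfalso
      obtain ⟨n, hn, hkill'⟩ := hkill r hr
      apply hSsec.1
      rw [eq_bot_iff, ← hkill']
      calc S = r ^ n • S := (pow_smul_self hfix n).symm
        _ ≤ r ^ n • (K₁ ⊔ K₂) := Submodule.map_mono hSle
    · exact (pw_smul_eq_bot_iff _ _).1 hbot
end
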